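/- arXiv:2407.01456 — 2 statements merged into one kernel-verified Lean document; each statement's English description precedes it below -/
import Mathlib

section
/- For all real-valued random variables G and G̃, if Y is a binary random variable with ℙ(Y = 1 | G) = 1/(1 + e^{−G}), then E[KL( ℙ(Y ∈ · | G) ‖ ℙ(Y ∈ · | G ← G̃) )] ≤ E[(G − G̃)²], where ℙ(Y ∈ · | G ← G̃) denotes the Bernoulli distribution with success probability 1/(1 + e^{−G̃}). -/
open MeasureTheory

/-- The sigmoid function `σ(z) = 1/(1+e^{−z})`. -/
noncomputable def sigmoid (z : ℝ) : ℝ := 1 / (1 + Real.exp (-z))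

/-- KL divergence between `Bernoulli p` and `Bernoulli q`:
`p·ln(p/q) + (1−p)·ln((1−p)/(1−q))`. -/
noncomputable def klBernoulli (p q : ℝ) : ℝ :=
  p * Real.log (p / q) + (1 - p) * Real.log ((1 - p) / (1 - q))

/-!
With `softplus x = log (1 + exp x)` one has `log σ(x) = -softplus (-x)` and
`log (1 - σ(x)) = -softplus x`, so `KL(Ber σ(a) ‖ Ber σ(b))` is the Bregman divergence
`softplus b - softplus a - σ(a) (b - a)` of softplus. Since `softplus' = σ` and
`σ' = σ (1 - σ) ≤ 1/4`, the mean value theorem bounds it by `(a - b)² / 4` pointwise;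
integrating gives the claim.
-/

open scoped NNReal

theorem abs_sub_sub_mul_le_of_lipschitzWith_deriv {f f' : ℝ → ℝ} {K : ℝ≥0}
    (hf : ∀ x, HasDerivAt f (f' x) x) (hf' : LipschitzWith K f') (a b : ℝ) :
    |f b - f a - f' a * (b - a)| ≤ K * (b - a) ^ 2 := by
  have hg : ∀ x ∈ Set.uIcc a b,
      HasDerivWithinAt (fun x ↦ f x - f' a * x) (f' x - f' a) (Set.uIcc a b) x := fun x _ ↦
    ((hf x).sub ((hasDerivAt_id x).const_mul (f' a))).hasDerivWithinAt.congr_deriv (by simp)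
  have hbound : ∀ x ∈ Set.uIcc a b, ‖f' x - f' a‖ ≤ K * |b - a| := fun x hx ↦
    (hf'.dist_le_mul x a).trans <| by gcongr; exact Set.abs_sub_left_of_mem_uIcc hx
  have := (convex_uIcc a b).norm_image_sub_le_of_norm_hasDerivWithin_le hg hbound
    Set.left_mem_uIcc Set.right_mem_uIcc
  rw [Real.norm_eq_abs, Real.norm_eq_abs] at this
  calc |f b - f a - f' a * (b - a)| = |f b - f' a * b - (f a - f' a * a)| := by ring_nf
    _ ≤ K * |b - a| * |b - a| := this
    _ = K * (b - a) ^ 2 := by rw [mul_assoc, abs_mul_abs_self, sq]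

namespace Real

theorem sigmoid_mul_one_sub_sigmoid_le (x : ℝ) : sigmoid x * (1 - sigmoid x) ≤ 4⁻¹ := by
  nlinarith [sq_nonneg (2 * sigmoid x - 1)]

theorem lipschitzWith_sigmoid : LipschitzWith 4⁻¹ sigmoid := by
  refine lipschitzWith_of_nnnorm_deriv_le differentiable_sigmoid fun x ↦ ?_
  rw [← NNReal.coe_le_coe, coe_nnnorm, deriv_sigmoid, norm_eq_abs,
    abs_of_nonneg (mul_nonneg (sigmoid_nonneg x) (sub_nonneg.2 (sigmoid_le_one x)))]
  exact_mod_cast sigmoid_mul_one_sub_sigmoid_le x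

noncomputable def softplus (x : ℝ) : ℝ := log (1 + exp x)

theorem hasDerivAt_softplus (x : ℝ) : HasDerivAt softplus (sigmoid x) x := by
  convert! ((hasDerivAt_exp x).const_add 1).log (by positivity) using 1
  rw [sigmoid_def, exp_neg]
  field_simp
  ring

theorem log_sigmoid (x : ℝ) : log (sigmoid x) = -softplus (-x) := by
  rw [sigmoid_def, log_inv, softplus]

theorem log_one_sub_sigmoid (x : ℝ) : log (1 - sigmoid x) = -softplus x := by
  rw [← sigmoid_neg, log_sigmoid, neg_neg]

theorem softplus_sub_softplus_neg (x : ℝ) : softplus x - softplus (-x) = x := by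
  rw [softplus, softplus, ← log_div (by positivity) (by positivity)]
  convert log_exp x using 2
  rw [exp_neg]
  field_simp
  ring

end Real

theorem klBernoulli_sigmoid (a b : ℝ) :
    klBernoulli (sigmoid a) (sigmoid b)
      = Real.softplus b - Real.softplus a - Real.sigmoid a * (b - a) := by
  have hsig (x : ℝ) : sigmoid x = Real.sigmoid x := one_div _
  have hne (x : ℝ) : Real.sigmoid x ≠ 0 := (Real.sigmoid_pos x).ne'
  have hne' (x : ℝ) : 1 - Real.sigmoid x ≠ 0 := (sub_pos.2 (Real.sigmoid_lt_one x)).ne'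
  rw [klBernoulli, hsig, hsig, Real.log_div (hne a) (hne b), Real.log_div (hne' a) (hne' b),
    Real.log_sigmoid, Real.log_sigmoid, Real.log_one_sub_sigmoid, Real.log_one_sub_sigmoid]
  linear_combination Real.sigmoid a *
    (Real.softplus_sub_softplus_neg a - Real.softplus_sub_softplus_neg b)

theorem klBernoulli_sigmoid_le_sq (a b : ℝ) :
    klBernoulli (sigmoid a) (sigmoid b) ≤ (a - b) ^ 2 := by
  rw [klBernoulli_sigmoid]
  calc _ ≤ |Real.softplus b - Real.softplus a - Real.sigmoid a * (b - a)| := le_abs_self _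
    _ ≤ ((4⁻¹ : ℝ≥0) : ℝ) * (b - a) ^ 2 := abs_sub_sub_mul_le_of_lipschitzWith_deriv
        Real.hasDerivAt_softplus Real.lipschitzWith_sigmoid a b
    _ ≤ (a - b) ^ 2 := by push_cast; nlinarith [sq_nonneg (b - a)]

theorem expected_kl_le_expected_sq_general {Ω : Type*} [MeasurableSpace Ω] (μ : Measure Ω)
    (G Gt : Ω → ℝ) :
    ∫⁻ ω, ENNReal.ofReal (klBernoulli (sigmoid (G ω)) (sigmoid (Gt ω))) ∂μ
      ≤ ∫⁻ ω, ENNReal.ofReal ((G ω - Gt ω) ^ 2) ∂μ :=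
  lintegral_mono fun ω ↦ ENNReal.ofReal_le_ofReal (klBernoulli_sigmoid_le_sq (G ω) (Gt ω))

/-- **Squared error upper bounds KL (Lemma 1).**  For all real-valued random variables
`G` and `G̃` on a common probability space, if `Y` is a binary random variable with
`ℙ(Y = 1 | G) = σ(G)`, then `E[KL(ℙ(Y ∈ · | G) ‖ ℙ(Y ∈ · | G ← G̃))] ≤ E[(G − G̃)²]`.
Since `ℙ(Y ∈ · | G)` is the Bernoulli distribution with parameter `σ(G)` and
`ℙ(Y ∈ · | G ← G̃)` is the Bernoulli distribution with parameter `σ(G̃)`, the expected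
KL divergence is exactly `E[klBernoulli (σ G) (σ G̃)]`. -/
theorem expected_kl_le_expected_sq {Ω : Type*} [MeasurableSpace Ω] (μ : Measure Ω)
    [IsProbabilityMeasure μ] (G Gt : Ω → ℝ) (hG : Measurable G) (hGt : Measurable Gt) :
    ∫⁻ ω, ENNReal.ofReal (klBernoulli (sigmoid (G ω)) (sigmoid (Gt ω))) ∂μ
      ≤ ∫⁻ ω, ENNReal.ofReal ((G ω - Gt ω) ^ 2) ∂μ :=
  expected_kl_le_expected_sq_general μ G Gt
end

section
/- For all real numbers x and y, (1/(1+e^x)) · ln((1+e^y)/(1+e^x)) + (1/(1+e^{−x})) · ln((1+e^{−y})/(1+e^{−x})) ≤ (x − y)². Equivalently, the KL divergence between the Bernoulli distribution with parameter σ(x) and the Bernoulli distribution with parameter σ(y), where σ(z) = 1/(1+e^{−z}), is at most (x − y)². -/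
lemma aux_log_shift (t : ℝ) :
    Real.log (1 + Real.exp (-t)) = Real.log (1 + Real.exp t) - t := by
  have h : 1 + Real.exp (-t) = Real.exp (-t) * (1 + Real.exp t) := by
    rw [Real.exp_neg]
    field_simp
    ring
  rw [h, Real.log_mul (by positivity) (by positivity), Real.log_exp]
  ring

lemma aux_key (s d : ℝ) (hs0 : 0 < s) (hs1 : s < 1) :
    Real.log (1 + s * (Real.exp d - 1)) - s * d ≤ d ^ 2 := by
  have hed := Real.exp_pos d
  have hpos : 0 < 1 + s * (Real.exp d - 1) := by nlinarith
  rcases le_or_gt 1 d with h1 | h1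
  · have hle : 1 + s * (Real.exp d - 1) ≤ Real.exp d := by
      nlinarith [Real.add_one_le_exp d]
    have hlog : Real.log (1 + s * (Real.exp d - 1)) ≤ d := by
      calc Real.log (1 + s * (Real.exp d - 1)) ≤ Real.log (Real.exp d) := by
            gcongr
        _ = d := Real.log_exp d
    nlinarith
  rcases le_or_gt d (-1) with h2 | h2
  · have hlog : Real.log (1 + s * (Real.exp d - 1)) ≤ 0 := by
      apply Real.log_nonpos (le_of_lt hpos)
      have : Real.exp d ≤ 1 := Real.exp_le_one_iff.mpr (by linarith)
      nlinarith
    nlinarith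
  · have habs : |d| ≤ 1 := abs_le.mpr ⟨le_of_lt h2, le_of_lt h1⟩
    have hb := Real.exp_bound habs (n := 2) (by norm_num)
    have hsum2 : ∑ i ∈ Finset.range 2, d ^ i / (Nat.factorial i : ℝ) = 1 + d := by
      simp [Finset.sum_range_succ]
    rw [hsum2] at hb
    have hb' : Real.exp d - 1 - d ≤ d ^ 2 := by
      have h3 : |d| ^ 2 = d ^ 2 := sq_abs d
      have := abs_le.mp hb
      norm_num at this
      nlinarith [this.2]
    have hlog := Real.log_le_sub_one_of_pos hpos
    have h0 : 0 ≤ Real.exp d - 1 - d := by nlinarith [Real.add_one_le_exp d]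
    nlinarith

/-- **Key pointwise inequality.**  For all real numbers `x` and `y`,
`(1/(1+e^x)) · ln((1+e^y)/(1+e^x)) + (1/(1+e^{−x})) · ln((1+e^{−y})/(1+e^{−x})) ≤ (x − y)²`.
This is exactly the KL divergence between `Bernoulli (σ x)` and `Bernoulli (σ y)`,
where `σ z = 1/(1+e^{−z})` is the sigmoid, being bounded by `(x−y)²`. -/
theorem sigmoid_bernoulli_kl_le_sq (x y : ℝ) :
    (1 / (1 + Real.exp x)) * Real.log ((1 + Real.exp y) / (1 + Real.exp x))
      + (1 / (1 + Real.exp (-x))) * Real.log ((1 + Real.exp (-y)) / (1 + Real.exp (-x)))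
      ≤ (x - y) ^ 2 := by
  have hx : (0:ℝ) < 1 + Real.exp x := by positivity
  have hy : (0:ℝ) < 1 + Real.exp y := by positivity
  have hx' : (0:ℝ) < 1 + Real.exp (-x) := by positivity
  have hy' : (0:ℝ) < 1 + Real.exp (-y) := by positivity
  set s := 1 / (1 + Real.exp (-x)) with hs
  have hs0 : 0 < s := by positivity
  have hs1 : s < 1 := by
    rw [hs, div_lt_one hx']
    nlinarith [Real.exp_pos (-x)]
  have hsum : 1 / (1 + Real.exp x) + s = 1 := by
    rw [hs, Real.exp_neg]
    have := (Real.exp_pos x).ne'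
    field_simp
    ring
  have harg : 1 + s * (Real.exp (y - x) - 1) = (1 + Real.exp y) / (1 + Real.exp x) := by
    rw [hs, Real.exp_neg, Real.exp_sub]
    have := (Real.exp_pos x).ne'
    field_simp
    ring
  have hlog1 : Real.log ((1 + Real.exp y) / (1 + Real.exp x))
      = Real.log (1 + Real.exp y) - Real.log (1 + Real.exp x) :=
    Real.log_div hy.ne' hx.ne'
  have hlog2 : Real.log ((1 + Real.exp (-y)) / (1 + Real.exp (-x)))
      = (Real.log (1 + Real.exp y) - y) - (Real.log (1 + Real.exp x) - x) := by
    rw [Real.log_div hy'.ne' hx'.ne', aux_log_shift y, aux_log_shift x]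
  have key := aux_key s (y - x) hs0 hs1
  rw [harg, hlog1] at key
  have h1 : 1 / (1 + Real.exp x) = 1 - s := by linarith
  rw [hlog1, hlog2, h1]
  calc (1 - s) * (Real.log (1 + Real.exp y) - Real.log (1 + Real.exp x))
        + s * ((Real.log (1 + Real.exp y) - y) - (Real.log (1 + Real.exp x) - x))
      = (Real.log (1 + Real.exp y) - Real.log (1 + Real.exp x)) - s * (y - x) := by ring
    _ ≤ (y - x) ^ 2 := key
    _ = (x - y) ^ 2 := by ring
end
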